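/- arXiv:1909.02540 — 2 statements merged into one kernel-verified Lean document; each statement's English description precedes it below -/
import Mathlib

section
/- Let F be a nonempty set of density matrices on ℂ^d and F' a closed set of density matrices on ℂ^{d'}. Let E : M_d(ℂ) → M_{d'}(ℂ) be a positive trace-preserving linear map with E(ω) ∈ F' for every ω ∈ F. Let ρ be a full-rank density matrix on ℂ^d and ψ ∈ ℂ^{d'} a unit vector with |ψ⟩⟨ψ| ∉ F'. Then E(ρ) ≠ |ψ⟩⟨ψ|. (Deterministic exact purification of a full-rank state to a pure resource state is impossible.) -/
open scoped Matrix ComplexOrder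

noncomputable section

/-- A density matrix: a positive semidefinite complex matrix with unit trace. -/
def IsDensity {n : Type*} [Fintype n] (A : Matrix n n ℂ) : Prop :=
  A.PosSemidef ∧ A.trace = 1

/-- The smallest eigenvalue of a Hermitian matrix (`0` by convention otherwise). -/
noncomputable def minEig {n : Type*} [Fintype n] [DecidableEq n] (A : Matrix n n ℂ) : ℝ :=
  letI := Classical.propDecidable A.IsHermitian
  if h : A.IsHermitian then ⨅ i, h.eigenvalues i else 0

/-- The overlap `⟨ψ, A ψ⟩` (as a real number). -/
noncomputable def overlap {n : Type*} [Fintype n] (A : Matrix n n ℂ) (ψ : n → ℂ) : ℝ :=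
  (dotProduct (star ψ) (A.mulVec ψ)).re

/-- `f_ψ = sup_{ω ∈ F} ⟨ψ, ω ψ⟩`, with the convention `sup ∅ = 0`. -/
noncomputable def maxOverlap {n : Type*} [Fintype n] (F : Set (Matrix n n ℂ)) (ψ : n → ℂ) : ℝ :=
  sSup ((fun ω => overlap ω ψ) '' F)

/-- A positive map: it sends positive semidefinite matrices to positive semidefinite matrices. -/
def PosMap {n m : Type*} [Fintype n] [Fintype m]
    (Φ : Matrix n n ℂ →ₗ[ℂ] Matrix m m ℂ) : Prop :=
  ∀ X, X.PosSemidef → (Φ X).PosSemidef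

/-- A trace-preserving map. -/
def TracePreserving {n m : Type*} [Fintype n] [Fintype m]
    (Φ : Matrix n n ℂ →ₗ[ℂ] Matrix m m ℂ) : Prop :=
  ∀ X, (Φ X).trace = X.trace

/-!
A full-rank state dominates every state up to its smallest eigenvalue: `ε • ω ≤ ε • 1 ≤ ρ` with
`ε = minEig ρ > 0`. Positive maps are monotone, so `ε • E ω ≤ E ρ`. If `E ρ` were the pure state
`|ψ⟩⟨ψ|`, the state `E ω` would be dominated by a multiple of it, hence supported on `ψ`, hence
equal to `|ψ⟩⟨ψ|`; but `E ω` is free and `|ψ⟩⟨ψ|` is not.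
-/

open scoped MatrixOrder
open Matrix

section
variable {n : Type*} [Fintype n]

lemma IsDensity.le_one [DecidableEq n] {ω : Matrix n n ℂ} (hω : IsDensity ω) : ω ≤ 1 := by
  obtain ⟨hpos, htr⟩ := hω
  have hsum : ∑ i, hpos.1.eigenvalues i = 1 := RCLike.ofReal_injective (K := ℂ) <| by
    rw [RCLike.ofReal_sum, RCLike.ofReal_one, ← hpos.1.trace_eq_sum_eigenvalues, htr]
  rw [← map_one (algebraMap ℝ (Matrix n n ℂ)), le_algebraMap_iff_spectrum_le hpos.1.isSelfAdjoint,
    hpos.1.spectrum_real_eq_range_eigenvalues, Set.forall_mem_range]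
  intro i
  rw [← hsum]
  exact Finset.single_le_sum (fun j _ => hpos.eigenvalues_nonneg j) (Finset.mem_univ i)

lemma Matrix.IsHermitian.minEig_smul_one_le [DecidableEq n] {A : Matrix n n ℂ}
    (hA : A.IsHermitian) : minEig A • (1 : Matrix n n ℂ) ≤ A := by
  rw [← Algebra.algebraMap_eq_smul_one, algebraMap_le_iff_le_spectrum hA.isSelfAdjoint,
    hA.spectrum_real_eq_range_eigenvalues, Set.forall_mem_range, minEig, dif_pos hA]
  exact ciInf_le (Set.finite_range _).bddBelow

lemma Matrix.IsHermitian.minEig_smul_le_of_isDensity [DecidableEq n] {ρ ω : Matrix n n ℂ}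
    (hρ : ρ.IsHermitian) (hρ₀ : 0 ≤ minEig ρ) (hω : IsDensity ω) : minEig ρ • ω ≤ ρ :=
  (smul_le_smul_of_nonneg_left hω.le_one hρ₀).trans hρ.minEig_smul_one_le

lemma Matrix.mul_eq_zero_of_le {A B M : Matrix n n ℂ} (hA : 0 ≤ A) (hAB : A ≤ B)
    (hBM : B * M = 0) : A * M = 0 := by
  rw [nonneg_iff_posSemidef] at hA
  rw [ext_iff_mulVec]
  intro v
  rw [← mulVec_mulVec, zero_mulVec]
  set x := M *ᵥ v
  have hBx : B *ᵥ x = 0 := by rw [mulVec_mulVec, hBM, zero_mulVec]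
  -- `⟨x, A x⟩` is squeezed between `0` and `⟨x, B x⟩ = 0`.
  have hxAx := (le_iff.mp hAB).dotProduct_mulVec_nonneg x
  rw [sub_mulVec, dotProduct_sub, hBx, dotProduct_zero, zero_sub, neg_nonneg] at hxAx
  exact (hA.dotProduct_mulVec_zero_iff x).mp
    (le_antisymm hxAx (hA.dotProduct_mulVec_nonneg x))

lemma Matrix.IsHermitian.eq_smul_vecMulVec_of_mul_eq {A : Matrix n n ℂ} (hA : A.IsHermitian)
    {ψ : n → ℂ} (h : A * vecMulVec ψ (star ψ) = A) :
    A = (star ψ ⬝ᵥ A *ᵥ ψ) • vecMulVec ψ (star ψ) := by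
  have hQ : (vecMulVec ψ (star ψ))ᴴ = vecMulVec ψ (star ψ) := by
    rw [conjTranspose_vecMulVec, star_star]
  have h' : vecMulVec ψ (star ψ) * A = A :=
    calc vecMulVec ψ (star ψ) * A = (vecMulVec ψ (star ψ))ᴴ * Aᴴ := by rw [hQ, hA.eq]
      _ = (A * vecMulVec ψ (star ψ))ᴴ := (conjTranspose_mul _ _).symm
      _ = A := by rw [h, hA.eq]
  calc A = vecMulVec ψ (star ψ) * (A * vecMulVec ψ (star ψ)) := by rw [h, h']
    _ = _ := by
      rw [mul_vecMulVec, mul_vecMulVec, vecMulVec_mulVec, op_smul_eq_smul, smul_vecMulVec]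

lemma vecMulVec_mul_self {ψ : n → ℂ} (hψ : star ψ ⬝ᵥ ψ = 1) :
    vecMulVec ψ (star ψ) * vecMulVec ψ (star ψ) = vecMulVec ψ (star ψ) := by
  rw [vecMulVec_mul_vecMulVec, hψ, one_smul]

lemma IsDensity.eq_of_smul_le_vecMulVec [DecidableEq n] {A : Matrix n n ℂ} (hA : IsDensity A)
    {ψ : n → ℂ} (hψ : star ψ ⬝ᵥ ψ = 1) {c : ℝ} (hc : 0 < c) (hle : c • A ≤ vecMulVec ψ (star ψ)) :
    A = vecMulVec ψ (star ψ) := by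
  set Q := vecMulVec ψ (star ψ)
  have hcA : c • A * (1 - Q) = 0 :=
    mul_eq_zero_of_le (smul_nonneg hc.le (nonneg_iff_posSemidef.mpr hA.1)) hle
      (by rw [mul_sub, mul_one, vecMulVec_mul_self hψ, sub_self])
  have hAQ : A * Q = A := by
    rw [smul_mul_assoc, smul_eq_zero_iff_right hc.ne', mul_sub, mul_one, sub_eq_zero] at hcA
    exact hcA.symm
  have hA_eq := hA.1.1.eq_smul_vecMulVec_of_mul_eq hAQ
  have htr := congrArg trace hA_eq
  rw [hA.2, trace_smul, trace_vecMulVec, dotProduct_comm ψ, hψ, smul_eq_mul, mul_one] at htr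
  rwa [← htr, one_smul] at hA_eq

end

section
variable {n m : Type*} [Fintype n] [Fintype m] {Φ : Matrix n n ℂ →ₗ[ℂ] Matrix m m ℂ}

lemma PosMap.monotone (hΦ : PosMap Φ) : Monotone Φ := fun A B hAB => by
  rw [le_iff, ← map_sub]
  exact hΦ _ hAB

lemma PosMap.isDensity (hΦ : PosMap Φ) (hΦtp : TracePreserving Φ) {ω : Matrix n n ℂ}
    (hω : IsDensity ω) : IsDensity (Φ ω) :=
  ⟨hΦ ω hω.1, (hΦtp ω).trans hω.2⟩

end

theorem no_go_exact_purification_deterministic_general {d d' : ℕ}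
    (F : Set (Matrix (Fin d) (Fin d) ℂ)) (hFne : F.Nonempty)
    (hFden : ∀ ω ∈ F, IsDensity ω)
    (F' : Set (Matrix (Fin d') (Fin d') ℂ))
    (E : Matrix (Fin d) (Fin d) ℂ →ₗ[ℂ] Matrix (Fin d') (Fin d') ℂ)
    (hEpos : PosMap E) (hEtp : TracePreserving E)
    (hEfree : ∀ ω ∈ F, E ω ∈ F')
    (ρ : Matrix (Fin d) (Fin d) ℂ) (hρ : IsDensity ρ) (hρfull : 0 < minEig ρ)
    (ψ : Fin d' → ℂ) (hψ : dotProduct (star ψ) ψ = 1)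
    (hψres : Matrix.vecMulVec ψ (star ψ) ∉ F') :
    E ρ ≠ Matrix.vecMulVec ψ (star ψ) := by
  intro hEρ
  obtain ⟨ω, hω⟩ := hFne
  have hdom : minEig ρ • E ω ≤ vecMulVec ψ (star ψ) := by
    rw [← hEρ, ← LinearMap.map_smul_of_tower]
    exact hEpos.monotone (hρ.1.1.minEig_smul_le_of_isDensity hρfull.le (hFden ω hω))
  have hEω := (hEpos.isDensity hEtp (hFden ω hω)).eq_of_smul_le_vecMulVec hψ hρfull hdom
  exact hψres (hEω ▸ hEfree ω hω)

/-- Deterministic exact purification of a full-rank state to a pure resource state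
is impossible. -/
theorem no_go_exact_purification_deterministic {d d' : ℕ}
    (F : Set (Matrix (Fin d) (Fin d) ℂ)) (hFne : F.Nonempty)
    (hFden : ∀ ω ∈ F, IsDensity ω)
    (F' : Set (Matrix (Fin d') (Fin d') ℂ)) (hF'cl : IsClosed F')
    (hF'den : ∀ ω ∈ F', IsDensity ω)
    (E : Matrix (Fin d) (Fin d) ℂ →ₗ[ℂ] Matrix (Fin d') (Fin d') ℂ)
    (hEpos : PosMap E) (hEtp : TracePreserving E)
    (hEfree : ∀ ω ∈ F, E ω ∈ F')
    (ρ : Matrix (Fin d) (Fin d) ℂ) (hρ : IsDensity ρ) (hρfull : 0 < minEig ρ)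
    (ψ : Fin d' → ℂ) (hψ : dotProduct (star ψ) ψ = 1)
    (hψres : Matrix.vecMulVec ψ (star ψ) ∉ F') :
    E ρ ≠ Matrix.vecMulVec ψ (star ψ) :=
  no_go_exact_purification_deterministic_general F hFne hFden F' E hEpos hEtp hEfree ρ hρ hρfull ψ
    hψ hψres
end
end

section
/- Let ρ and σ be density matrices on ℂ^d and let p ∈ (0,1] be such that ρ − p·σ is positive semidefinite. If M is a d×d complex matrix with 0 ≤ M ≤ I in the Loewner order and Tr(ρ M) ≥ 1, then Tr(σ M) = 1. Consequently β_0(ρ‖σ) = 1, i.e., D_min(ρ‖σ) := −log β_0(ρ‖σ) = 0. (Key step showing that a channel with a free component has vanishing min-relative entropy to that component, used in the proof of Theorem S1.) -/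
open scoped Matrix ComplexOrder

noncomputable section

/-- The optimal hypothesis-testing error
`β_ε(ρ‖σ) = inf { Tr(M σ) : 0 ≤ M ≤ I, Tr(ρ M) ≥ 1 - ε }`. -/
noncomputable def betaErr {n : Type*} [Fintype n] [DecidableEq n] (ε : ℝ)
    (ρ σ : Matrix n n ℂ) : ℝ :=
  sInf {x : ℝ | ∃ M : Matrix n n ℂ, M.PosSemidef ∧ (1 - M).PosSemidef ∧
    1 - ε ≤ ((ρ * M).trace).re ∧ x = ((σ * M).trace).re}

/-- The hypothesis testing relative entropy `D_H^ε(ρ‖σ) = -log β_ε(ρ‖σ)`. -/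
noncomputable def DH {n : Type*} [Fintype n] [DecidableEq n] (ε : ℝ)
    (ρ σ : Matrix n n ℂ) : ℝ :=
  - Real.log (betaErr ε ρ σ)

/-! If `0 ≤ M ≤ 1` and `Tr(ρ M) ≥ 1`, then `Tr(ρ (1 - M)) = 1 - Tr(ρ M) ≤ 0`, while `ρ ≥ p σ` and
`1 - M ≥ 0` give `Tr(ρ (1 - M)) ≥ p Tr(σ (1 - M)) ≥ 0`. Since `p > 0`, `Tr(σ (1 - M)) = 0`, i.e.
`Tr(σ M) = 1`. The identity is a feasible test, so the infimum defining `β_0(ρ‖σ)` is over `{1}`. -/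

namespace Matrix

variable {n 𝕜 : Type*} [Fintype n] [RCLike 𝕜]

open scoped MatrixOrder in
theorem PosSemidef.trace_mul_nonneg {A B : Matrix n n 𝕜} (hA : A.PosSemidef)
    (hB : B.PosSemidef) : 0 ≤ (A * B).trace := by
  classical
  obtain ⟨X, rfl⟩ := CStarAlgebra.nonneg_iff_eq_star_mul_self.mp hA.nonneg
  rw [star_eq_conjTranspose, Matrix.mul_assoc, trace_mul_comm]
  exact (hB.mul_mul_conjTranspose_same X).trace_nonneg

theorem PosSemidef.re_trace_mul_nonneg {A B : Matrix n n 𝕜} (hA : A.PosSemidef)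
    (hB : B.PosSemidef) : 0 ≤ RCLike.re (A * B).trace :=
  (RCLike.nonneg_iff.mp (hA.trace_mul_nonneg hB)).1

theorem re_trace_mul_eq_zero_of_sub_smul_posSemidef {ρ σ E : Matrix n n 𝕜} {p : ℝ}
    (hσ : σ.PosSemidef) (hp : 0 < p) (hρσ : (ρ - p • σ).PosSemidef) (hE : E.PosSemidef)
    (hρE : RCLike.re (ρ * E).trace ≤ 0) : RCLike.re (σ * E).trace = 0 := by
  have hσE := hσ.re_trace_mul_nonneg hE
  have hgap := hρσ.re_trace_mul_nonneg hE
  rw [sub_mul, trace_sub, smul_mul, trace_smul, map_sub, RCLike.smul_re] at hgap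
  nlinarith

theorem re_trace_mul_one_sub [DecidableEq n] (A M : Matrix n n 𝕜) :
    RCLike.re (A * (1 - M)).trace = RCLike.re A.trace - RCLike.re (A * M).trace := by
  rw [mul_sub, mul_one, trace_sub, map_sub]

end Matrix

open Matrix

theorem IsDensity.re_trace_mul_eq_one_of_sub_smul_posSemidef {n : Type*} [Fintype n]
    [DecidableEq n] {ρ σ M : Matrix n n ℂ} {p : ℝ} (hρ : IsDensity ρ) (hσ : IsDensity σ) (hp : 0 < p)
    (hρσ : (ρ - p • σ).PosSemidef) (hM : (1 - M).PosSemidef) (hρM : 1 ≤ (ρ * M).trace.re) :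
    (σ * M).trace.re = 1 := by
  have hσM := re_trace_mul_eq_zero_of_sub_smul_posSemidef hσ.1 hp hρσ hM (by
    rw [re_trace_mul_one_sub, hρ.2]
    simpa using hρM)
  rw [re_trace_mul_one_sub, hσ.2, RCLike.one_re] at hσM
  exact (sub_eq_zero.mp hσM).symm

theorem betaErr_zero_eq_one {n : Type*} [Fintype n] [DecidableEq n] {ρ σ : Matrix n n ℂ}
    (hρ : ρ.trace = 1) (hσ : σ.trace = 1)
    (h : ∀ M : Matrix n n ℂ, M.PosSemidef → (1 - M).PosSemidef →
      1 ≤ ((ρ * M).trace).re → ((σ * M).trace).re = 1) :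
    betaErr 0 ρ σ = 1 := by
  suffices hset : {x : ℝ | ∃ M : Matrix n n ℂ, M.PosSemidef ∧ (1 - M).PosSemidef ∧
      1 - 0 ≤ ((ρ * M).trace).re ∧ x = ((σ * M).trace).re} = {1} by
    rw [betaErr, hset, csInf_singleton]
  ext x
  constructor
  · rintro ⟨M, hM, h1M, hρM, rfl⟩
    exact h M hM h1M (by simpa using hρM)
  · rintro rfl
    exact ⟨1, .one, by simpa using PosSemidef.zero, by simp [hρ], by simp [hσ]⟩

theorem DH_eq_zero_of_betaErr_eq_one {n : Type*} [Fintype n] [DecidableEq n] {ε : ℝ}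
    {ρ σ : Matrix n n ℂ} (h : betaErr ε ρ σ = 1) : DH ε ρ σ = 0 := by
  rw [DH, h, Real.log_one, neg_zero]

theorem Dmin_vanishes_of_free_component_general {d : ℕ}
    (ρ σ : Matrix (Fin d) (Fin d) ℂ) (hρ : IsDensity ρ) (hσ : IsDensity σ)
    (p : ℝ) (hp0 : 0 < p)
    (hpsd : (ρ - p • σ).PosSemidef) :
    (∀ M : Matrix (Fin d) (Fin d) ℂ, M.PosSemidef → (1 - M).PosSemidef →
      1 ≤ ((ρ * M).trace).re → ((σ * M).trace).re = 1) ∧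
    betaErr 0 ρ σ = 1 ∧ DH 0 ρ σ = 0 := by
  have feasible_tests : ∀ M : Matrix (Fin d) (Fin d) ℂ, M.PosSemidef → (1 - M).PosSemidef →
      1 ≤ ((ρ * M).trace).re → ((σ * M).trace).re = 1 := fun _ _ hM hρM =>
    hρ.re_trace_mul_eq_one_of_sub_smul_posSemidef hσ hp0 hpsd hM hρM
  have hβ := betaErr_zero_eq_one hρ.2 hσ.2 feasible_tests
  exact ⟨feasible_tests, hβ, DH_eq_zero_of_betaErr_eq_one hβ⟩

/-- If `ρ ≥ p σ` for some `p ∈ (0,1]`, then any feasible test for `β_0(ρ‖σ)` has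
`Tr(σ M) = 1`; consequently `β_0(ρ‖σ) = 1`, i.e. `D_min(ρ‖σ) = 0`. -/
theorem Dmin_vanishes_of_free_component {d : ℕ}
    (ρ σ : Matrix (Fin d) (Fin d) ℂ) (hρ : IsDensity ρ) (hσ : IsDensity σ)
    (p : ℝ) (hp0 : 0 < p) (hp1 : p ≤ 1)
    (hpsd : (ρ - p • σ).PosSemidef) :
    (∀ M : Matrix (Fin d) (Fin d) ℂ, M.PosSemidef → (1 - M).PosSemidef →
      1 ≤ ((ρ * M).trace).re → ((σ * M).trace).re = 1) ∧
    betaErr 0 ρ σ = 1 ∧ DH 0 ρ σ = 0 :=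
  Dmin_vanishes_of_free_component_general ρ σ hρ hσ p hp0 hpsd
end
end
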